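/- arXiv:2507.13327 — 2 statements merged into one kernel-verified Lean document; each statement's English description precedes it below -/
import Mathlib

section
/- Let q ≥ 2, t ≥ 1, and f : (ℤ/qℤ)^t → ℝ. Then there exists a constant C ∈ ℝ such that for every nonzero b ∈ (ℤ/qℤ)^t and every c ∈ ℤ/qℤ for which the hyperplane H = {a ∈ (ℤ/qℤ)^t : b·a = c} is nonempty one has ∑_{a∈H} f(a) = C · |H| (i.e., f has average C over every nonempty hyperplane), if and only if f is a constant function. -/
/-!
Subtract the common average `C`: the function `g = f - C` then sums to zero over every hyperplane,
and splitting `∑ₐ g a ψ(b ⬝ᵥ a)` along the hyperplanes `b ⬝ᵥ a = c` shows that every Fourier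
coefficient of `g` vanishes (for `b = 0` use the hyperplanes of any nonzero `b₀`). Since `ψ` is
primitive, the characters `a ↦ ψ(b ⬝ᵥ a)` are orthogonal, so Fourier inversion gives `g = 0`.
This works over `ℤ/qℤ` even for composite `q`, where a hyperplane need not have `q^(t-1)`
points and direct counting arguments fail.
-/

open Finset Matrix

lemma sum_mul_comp_eq_zero_of_sum_fiber_eq_zero {α β M : Type*} [Fintype α] [Fintype β]
    [DecidableEq β] [NonUnitalNonAssocSemiring M] {g : α → M} {ℓ : α → β}
    (hfiber : ∀ c, ∑ a ∈ univ.filter (fun a => ℓ a = c), g a = 0) (φ : β → M) :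
    ∑ a, g a * φ (ℓ a) = 0 := by
  rw [← sum_fiberwise univ ℓ]
  refine sum_eq_zero fun c _ => ?_
  calc ∑ a ∈ univ.filter (fun a => ℓ a = c), g a * φ (ℓ a)
      = ∑ a ∈ univ.filter (fun a => ℓ a = c), g a * φ c :=
        sum_congr rfl fun a ha => by rw [(mem_filter.1 ha).2]
    _ = 0 := by rw [← sum_mul, hfiber c, zero_mul]

namespace AddChar

variable {R M ι : Type*} [CommRing R] [Fintype ι]

lemma map_dotProduct [CommMonoid M] (ψ : AddChar R M) (b v : ι → R) :
    ψ (b ⬝ᵥ v) = ∏ i, ψ (b i * v i) := by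
  classical
  unfold dotProduct
  induction (univ : Finset ι) using Finset.induction_on with
  | empty => simp
  | insert i s hi ih => rw [sum_insert hi, prod_insert hi, map_add_eq_mul, ih]

variable [Fintype R] [DecidableEq R] [DecidableEq ι] {ψ : AddChar R ℂ}

lemma sum_dotProduct (hψ : ψ.IsPrimitive) (v : ι → R) :
    ∑ b : ι → R, ψ (b ⬝ᵥ v) = if v = 0 then (Fintype.card R : ℂ) ^ Fintype.card ι else 0 := by
  simp_rw [map_dotProduct]
  rw [← Fintype.prod_sum fun i s => ψ (s * v i)]
  simp_rw [sum_mulShift _ hψ, Nat.cast_ite, Nat.cast_zero, prod_ite_zero]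
  simp [funext_iff]

lemma eq_zero_of_sum_mul_dotProduct_eq_zero (hψ : ψ.IsPrimitive) {g : (ι → R) → ℂ}
    (hg : ∀ b, ∑ a, g a * ψ (b ⬝ᵥ a) = 0) : g = 0 := by
  funext x
  have inversion : ∑ b, (∑ a, g a * ψ (b ⬝ᵥ a)) * ψ (-(b ⬝ᵥ x))
      = (Fintype.card R : ℂ) ^ Fintype.card ι * g x := by
    simp_rw [sum_mul, mul_assoc, ← map_add_eq_mul, ← sub_eq_add_neg, ← dotProduct_sub]
    rw [sum_comm]
    simp_rw [← mul_sum, sum_dotProduct hψ, sub_eq_zero, mul_ite, mul_zero, sum_ite_eq',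
      mem_univ, if_true, mul_comm]
  have hcard : (Fintype.card R : ℂ) ^ Fintype.card ι ≠ 0 :=
    pow_ne_zero _ (Nat.cast_ne_zero.2 Fintype.card_ne_zero)
  simpa [hg, hcard] using inversion.symm

lemma eq_zero_of_sum_hyperplane_eq_zero [Nontrivial R] [Nonempty ι] (hψ : ψ.IsPrimitive)
    {g : (ι → R) → ℂ} (hg : ∀ b ≠ 0, ∀ c, ∑ a ∈ univ.filter (fun a => b ⬝ᵥ a = c), g a = 0) :
    g = 0 := by
  refine eq_zero_of_sum_mul_dotProduct_eq_zero hψ fun b => ?_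
  rcases eq_or_ne b 0 with rfl | hb
  · obtain ⟨b₀, hb₀⟩ := exists_ne (0 : ι → R)
    simpa using sum_mul_comp_eq_zero_of_sum_fiber_eq_zero (hg b₀ hb₀) (fun _ => 1)
  · exact sum_mul_comp_eq_zero_of_sum_fiber_eq_zero (hg b hb) ψ

end AddChar

/-- A function `f : (ℤ/qℤ)^t → ℝ` has the same average `C` over every nonempty
hyperplane `{a : b·a = c}` (for nonzero `b ∈ (ℤ/qℤ)^t` and `c ∈ ℤ/qℤ`) if and only if
`f` is a constant function. -/
theorem constant_hyperplane_average_iff_constant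
    (q t : ℕ) [NeZero q] (hq : 2 ≤ q) (ht : 1 ≤ t) (f : (Fin t → ZMod q) → ℝ) :
    (∃ C : ℝ, ∀ b : Fin t → ZMod q, b ≠ 0 → ∀ c : ZMod q,
        ∀ H : Finset (Fin t → ZMod q),
          H = Finset.univ.filter (fun a => ∑ i, b i * a i = c) →
          H.Nonempty → ∑ a ∈ H, f a = C * H.card) ↔
      (∃ C : ℝ, ∀ a, f a = C) := by
  constructor
  · rintro ⟨C, hC⟩
    have : Fact (1 < q) := ⟨hq⟩
    have : Nonempty (Fin t) := ⟨⟨0, ht⟩⟩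
    have hfiber : ∀ b ≠ 0, ∀ c, ∑ a ∈ univ.filter (fun a => b ⬝ᵥ a = c),
        ((f a - C : ℝ) : ℂ) = 0 := by
      intro b hb c
      rcases (univ.filter (fun a => b ⬝ᵥ a = c)).eq_empty_or_nonempty with hH | hH
      · rw [hH, sum_empty]
      · rw [← Complex.ofReal_sum, sum_sub_distrib,
          hC b hb c (univ.filter fun a => b ⬝ᵥ a = c) rfl hH]
        simp [mul_comm]
    have hg := AddChar.eq_zero_of_sum_hyperplane_eq_zero (ZMod.isPrimitive_stdAddChar q) hfiber
    exact ⟨C, fun a => by simpa [sub_eq_zero] using congrFun hg a⟩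
  · rintro ⟨C, hC⟩
    exact ⟨C, fun b _ c H _ _ => by simp [hC, mul_comm]⟩
end

section
/- Fix q ≥ 2 and n ≥ 1. For i ∈ {1,…,n} and a ∈ ℤ/qℤ, let D_{i,a} = {x ∈ (ℤ/qℤ)^n : x_i = a}. Call D ⊆ (ℤ/qℤ)^n a reverse design if ∑_{x∈D} χ_y(x) = 0 for every y ∈ (ℤ/qℤ)^n with Hamming weight |y| ≥ 2. Then: (i) every D_{i,a} is a reverse design; (ii) every D_{i,a} is a minimal reverse design, i.e. the only nonempty reverse design contained in D_{i,a} is D_{i,a} itself; (iii) every reverse design is a union of sets of the form D_{i,a}. -/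
/-!
Slabs are reverse designs: if `|y| ≥ 2`, then `y j ≠ 0` for some `j ≠ i`, and translating the
slab `D_{i,a}` along coordinate `j` multiplies its character sum by `χ_y(e_j) ≠ 1`.

Conversely, the Fourier transform of the indicator `f` of a reverse design is supported on
weight `≤ 1`, so by Fourier inversion `f` is a combination of functions of a single coordinate.
Every such function satisfies `f z + (n - 1) f x = ∑ i, f (x[i := z i])`. For `x ∈ D` this
0/1-valued identity says that exactly one of `z ∈ D` and `x[i := z i] ∉ D` (for some `i`) holds.
Taking `z = x[j := b][i := c]` shows that all exits `x[i := c] ∉ D` from `x` change one and the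
same coordinate `j`; then every `z` with `z j = x j` has no exit, so the slab `D_{j, x j}` lies in
`D`. Minimality follows because one slab never contains another, different, slab.
-/

open Finset Matrix

/-- A reverse design of the Hamming graph `H(n,q)`: a subset averaging every Laplacian
eigenvector `χ_y` with Hamming weight `|y| ≥ 2` (all but the first two eigenspaces in
reverse Laplacian order). -/
def HammingRevDesign (q n : ℕ) [NeZero q] (ω : ℂ) (D : Finset (Fin n → ZMod q)) : Prop :=
  ∀ y : Fin n → ZMod q, 2 ≤ hammingNorm y →
    ∑ x ∈ D, ω ^ (∑ i, y i * x i).val = 0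

/-- The set `D_{i,a}` of vectors whose `i`-th coordinate equals `a`. -/
def hammingSlab (q n : ℕ) [NeZero q] (i : Fin n) (a : ZMod q) : Finset (Fin n → ZMod q) :=
  Finset.univ.filter fun x => x i = a

open Function AddChar

section HammingNorm

variable {ι : Type*} {β : ι → Type*} [Fintype ι] [∀ i, Zero (β i)] [∀ i, DecidableEq (β i)]
  {y : ∀ i, β i}

theorem hammingNorm_le_one_iff [Nonempty ι] :
    hammingNorm y ≤ 1 ↔ ∃ j, ∀ i ≠ j, y i = 0 := by
  constructor
  · intro hy
    by_cases h : ∃ j, y j ≠ 0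
    · obtain ⟨j, hj⟩ := h
      refine ⟨j, fun i hij => by_contra fun hi => hij ?_⟩
      exact card_le_one.1 hy i (by simpa using hi) j (by simpa using hj)
    · push Not at h
      exact ⟨Classical.arbitrary ι, fun i _ => h i⟩
  · rintro ⟨j, hj⟩
    refine card_le_one.2 fun a ha b hb => ?_
    simp only [mem_filter, mem_univ, true_and] at ha hb
    exact (not_imp_comm.1 (hj a) ha).trans (not_imp_comm.1 (hj b) hb).symm

theorem exists_ne_and_ne_zero_of_two_le_hammingNorm (hy : 2 ≤ hammingNorm y) (i : ι) :
    ∃ j ≠ i, y j ≠ 0 := by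
  have : Nonempty ι := ⟨i⟩
  by_contra! h
  have := hammingNorm_le_one_iff.2 ⟨i, h⟩
  omega

end HammingNorm

theorem hammingNorm_neg {ι : Type*} {β : ι → Type*} [Fintype ι] [∀ i, AddGroup (β i)]
    [∀ i, DecidableEq (β i)] (y : ∀ i, β i) : hammingNorm (-y) = hammingNorm y :=
  hammingNorm_comp (fun _ => Neg.neg) (fun _ => neg_injective) (fun _ => neg_zero)

theorem AddChar.sum_eq_zero_of_add_mem_iff {G R : Type*} [AddGroup G] [CommRing R] [IsDomain R]
    (φ : AddChar G R) {S : Finset G} {s : G} (hS : ∀ x, x + s ∈ S ↔ x ∈ S) (hs : φ s ≠ 1) :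
    ∑ x ∈ S, φ x = 0 := by
  refine eq_zero_of_mul_eq_self_left hs ?_
  rw [mul_sum]
  exact sum_equiv (Equiv.addRight s) (fun x => (hS x).symm)
    fun x _ => by rw [Equiv.coe_addRight, map_add_eq_mul, mul_comm]

variable {q n : ℕ} [NeZero q] {ω : ℂ}

theorem AddChar.zmodChar_eq_one_iff (hω : IsPrimitiveRoot ω q) {a : ZMod q} :
    zmodChar q hω.pow_eq_one a = 1 ↔ a = 0 := by
  rw [zmodChar_apply, hω.pow_eq_one_iff_dvd, ← ZMod.natCast_eq_zero_iff, ZMod.natCast_zmod_val]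

noncomputable def hammingChar (hω : ω ^ q = 1) (y : Fin n → ZMod q) :
    AddChar (Fin n → ZMod q) ℂ where
  toFun x := zmodChar q hω (y ⬝ᵥ x)
  map_zero_eq_one' := by simp
  map_add_eq_mul' x x' := by rw [dotProduct_add, map_add_eq_mul]

theorem hammingChar_apply (hω : ω ^ q = 1) (y x : Fin n → ZMod q) :
    hammingChar hω y x = ω ^ (y ⬝ᵥ x).val := rfl

theorem hammingChar_comm (hω : ω ^ q = 1) (y x : Fin n → ZMod q) :
    hammingChar hω y x = hammingChar hω x y := by
  rw [hammingChar_apply, hammingChar_apply, dotProduct_comm]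

theorem hammingChar_neg_left (hω : ω ^ q = 1) (y x : Fin n → ZMod q) :
    hammingChar hω (-y) x = hammingChar hω y (-x) := by
  rw [hammingChar_apply, hammingChar_apply, neg_dotProduct, dotProduct_neg]

theorem hammingChar_single_ne_one (hω : IsPrimitiveRoot ω q) {y : Fin n → ZMod q} {j : Fin n}
    (hj : y j ≠ 0) : hammingChar hω.pow_eq_one y (Pi.single j 1) ≠ 1 := by
  rw [hammingChar_apply, dotProduct_single, mul_one, ← zmodChar_apply]
  exact (zmodChar_eq_one_iff hω).not.2 hj

theorem sum_hammingChar (hω : IsPrimitiveRoot ω q) (w : Fin n → ZMod q) :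
    ∑ y, hammingChar hω.pow_eq_one w y = if w = 0 then (q : ℂ) ^ n else 0 := by
  split_ifs with hw
  · simp [hw, hammingChar_apply, ZMod.card]
  · obtain ⟨j, hj⟩ := Function.ne_iff.1 hw
    exact sum_eq_zero_of_add_mem_iff _ (by simp) (hammingChar_single_ne_one hω hj)

theorem sum_sum_hammingChar_mul_neg (hω : IsPrimitiveRoot ω q) (D : Finset (Fin n → ZMod q))
    (x : Fin n → ZMod q) :
    ∑ y, (∑ z ∈ D, hammingChar hω.pow_eq_one y z) * hammingChar hω.pow_eq_one y (-x) =
      (q : ℂ) ^ n * if x ∈ D then 1 else 0 := by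
  calc _ = ∑ z ∈ D, ∑ y, hammingChar hω.pow_eq_one (z - x) y := by
        simp_rw [sum_mul, ← map_add_eq_mul, ← sub_eq_add_neg, hammingChar_comm _ _ (_ - x)]
        exact sum_comm
    _ = _ := by simp [sum_hammingChar hω, sub_eq_zero]

@[simp]
theorem mem_hammingSlab {i : Fin n} {a : ZMod q} {x : Fin n → ZMod q} :
    x ∈ hammingSlab q n i a ↔ x i = a := by
  simp [hammingSlab]

theorem hammingRevDesign_hammingSlab (hω : IsPrimitiveRoot ω q) (i : Fin n) (a : ZMod q) :
    HammingRevDesign q n ω (hammingSlab q n i a) := by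
  intro y hy
  obtain ⟨j, hji, hj⟩ := exists_ne_and_ne_zero_of_two_le_hammingNorm hy i
  refine sum_eq_zero_of_add_mem_iff (hammingChar hω.pow_eq_one y) (fun x => ?_)
    (hammingChar_single_ne_one hω hj)
  simp [hji.symm]

theorem HammingRevDesign.sum_hammingChar_eq_zero (hω : ω ^ q = 1) {D : Finset (Fin n → ZMod q)}
    (hD : HammingRevDesign q n ω D) {y : Fin n → ZMod q} (hy : 2 ≤ hammingNorm y) :
    ∑ x ∈ D, hammingChar hω y x = 0 :=
  hD y hy

theorem indicator_mem_span_hammingChar (hω : IsPrimitiveRoot ω q) {D : Finset (Fin n → ZMod q)}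
    (hD : HammingRevDesign q n ω D) :
    (fun x => if x ∈ D then (1 : ℂ) else 0) ∈ Submodule.span ℂ
      ((fun y => ⇑(hammingChar hω.pow_eq_one y)) '' {y | hammingNorm y ≤ 1}) := by
  have hinv : (fun x => if x ∈ D then (1 : ℂ) else 0) = ∑ y, (((q : ℂ) ^ n)⁻¹ *
      ∑ z ∈ D, hammingChar hω.pow_eq_one y z) • ⇑(hammingChar hω.pow_eq_one (-y)) := by
    funext x
    have hq : (q : ℂ) ^ n ≠ 0 := pow_ne_zero _ (Nat.cast_ne_zero.2 (NeZero.ne q))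
    simp only [Finset.sum_apply, Pi.smul_apply, smul_eq_mul, hammingChar_neg_left, mul_assoc,
      ← mul_sum, sum_sum_hammingChar_mul_neg hω, inv_mul_cancel_left₀ hq]
  rw [hinv]
  refine Submodule.sum_mem _ fun y _ => ?_
  by_cases hy : hammingNorm y ≤ 1
  · exact Submodule.smul_mem _ _ (Submodule.subset_span ⟨-y, by simpa [hammingNorm_neg], rfl⟩)
  · rw [hD.sum_hammingChar_eq_zero hω.pow_eq_one (not_le.1 hy), mul_zero, zero_smul]
    exact Submodule.zero_mem _

theorem sum_comp_update_apply {α R : Type*} [CommRing R] (g : α → R) (p x : Fin n → α)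
    (j : Fin n) :
    ∑ i, g (update p i (x i) j) = g (x j) + (n - 1) * g (p j) := by
  have h : ∀ i, g (update p i (x i) j) = g (p j) + if j = i then g (x j) - g (p j) else 0 := by
    intro i
    by_cases hij : j = i
    · subst hij; simp
    · simp [hij]
  simp only [h, sum_add_distrib, sum_ite_eq, mem_univ, if_true, sum_const, card_univ,
    Fintype.card_fin, nsmul_eq_mul]
  ring

theorem hammingChar_apply_of_forall_ne (hω : ω ^ q = 1) {y : Fin n → ZMod q} {j : Fin n}
    (hy : ∀ i ≠ j, y i = 0) (x : Fin n → ZMod q) :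
    hammingChar hω y x = zmodChar q hω (y j * x j) := by
  rw [hammingChar_apply, dotProduct, sum_eq_single j (fun i _ hi => by rw [hy i hi, zero_mul])
    (by simp), zmodChar_apply]

theorem add_mul_apply_eq_sum_apply_update_of_mem_span [NeZero n] (hω : ω ^ q = 1)
    {f : (Fin n → ZMod q) → ℂ}
    (hf : f ∈ Submodule.span ℂ ((fun y => ⇑(hammingChar hω y)) '' {y | hammingNorm y ≤ 1}))
    (x p : Fin n → ZMod q) :
    f x + (n - 1) * f p = ∑ i, f (update p i (x i)) := by
  induction hf using Submodule.span_induction with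
  | mem f hf =>
    obtain ⟨y, hy, rfl⟩ := hf
    obtain ⟨j, hj⟩ := hammingNorm_le_one_iff.1 hy
    simp only [hammingChar_apply_of_forall_ne hω hj]
    rw [sum_comp_update_apply (fun t => zmodChar q hω (y j * t))]
  | zero => simp
  | add f g _ _ hf hg => simp only [Pi.add_apply, sum_add_distrib, ← hf, ← hg]; ring
  | smul c f _ hf => simp only [Pi.smul_apply, smul_eq_mul, ← mul_sum, ← hf]; ring

theorem card_filter_update_notMem_add [NeZero n] (hω : IsPrimitiveRoot ω q)
    {D : Finset (Fin n → ZMod q)} (hD : HammingRevDesign q n ω D) {x : Fin n → ZMod q}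
    (hx : x ∈ D) (z : Fin n → ZMod q) :
    #{i | update x i (z i) ∉ D} + (if z ∈ D then 1 else 0) = 1 := by
  have h := add_mul_apply_eq_sum_apply_update_of_mem_span hω.pow_eq_one
    (indicator_mem_span_hammingChar hω hD) z x
  have hcard := card_filter_add_card_filter_not (s := univ) fun i => update x i (z i) ∈ D
  simp only [if_pos hx, mul_one, sum_boole, card_univ, Fintype.card_fin] at h hcard
  have hc : (#{i | update x i (z i) ∈ D} : ℂ) + #{i | update x i (z i) ∉ D} = n := by
    exact_mod_cast hcard
  have : ((#{i | update x i (z i) ∉ D} + (if z ∈ D then 1 else 0) : ℕ) : ℂ) = 1 := by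
    push_cast
    linear_combination h + hc
  exact_mod_cast this

theorem exists_hammingSlab_subset [NeZero n] (hω : IsPrimitiveRoot ω q)
    {D : Finset (Fin n → ZMod q)} (hD : HammingRevDesign q n ω D) {x : Fin n → ZMod q}
    (hx : x ∈ D) : ∃ j, hammingSlab q n j (x j) ⊆ D := by
  have key := card_filter_update_notMem_add hω hD hx
  obtain ⟨j, hj⟩ : ∃ j, ∀ i ≠ j, ∀ c, update x i c ∈ D := by
    by_cases h : ∃ j b, update x j b ∉ D
    · obtain ⟨j, b, hb⟩ := h
      refine ⟨j, fun i hij c => by_contra fun hc => ?_⟩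
      have hexits :
          {j, i} ⊆ ({k | update x k (update (update x j b) i c k) ∉ D} : Finset _) := by
        intro k hk
        rcases mem_insert.1 hk with rfl | hk
        · simpa [update_of_ne hij.symm] using hb
        · simpa [mem_singleton.1 hk] using hc
      have := card_le_card hexits
      have := key (update (update x j b) i c)
      rw [card_pair hij.symm] at *
      omega
    · push Not at h
      exact ⟨0, fun i _ c => h i c⟩
  refine ⟨j, fun z hz => ?_⟩
  have hexits : #{i | update x i (z i) ∉ D} = 0 := by
    refine card_eq_zero.2 (filter_eq_empty_iff.2 fun i _ => not_not.2 ?_)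
    by_cases hij : i = j
    · rw [hij, mem_hammingSlab.1 hz, update_eq_self]
      exact hx
    · exact hj i hij (z i)
  have := key z
  rw [hexits, zero_add] at this
  by_contra hzD
  simp [hzD] at this

theorem hammingSlab_eq_of_subset {i j : Fin n} {a b : ZMod q}
    (h : hammingSlab q n j b ⊆ hammingSlab q n i a) :
    hammingSlab q n j b = hammingSlab q n i a := by
  refine h.antisymm fun x hx => mem_hammingSlab.2 ?_
  by_cases hji : j = i
  · subst hji
    have hba : b = a := mem_hammingSlab.1 (h (x := fun _ => b) (mem_hammingSlab.2 rfl))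
    exact (mem_hammingSlab.1 hx).trans hba.symm
  · have hconst : ∀ c, c = a := fun c => by
      simpa using mem_hammingSlab.1
        (h (x := update (update x j b) i c) (by simp [update_of_ne hji]))
    exact (hconst _).trans (hconst b).symm

theorem hammingSlab_minimal_reverse_designs_general
    (q n : ℕ) [NeZero q] (hn : 1 ≤ n)
    (ω : ℂ) (hω : IsPrimitiveRoot ω q) :
    (∀ (i : Fin n) (a : ZMod q), HammingRevDesign q n ω (hammingSlab q n i a)) ∧
    (∀ (i : Fin n) (a : ZMod q), ∀ D' ⊆ hammingSlab q n i a,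
        HammingRevDesign q n ω D' → D'.Nonempty → D' = hammingSlab q n i a) ∧
    (∀ D : Finset (Fin n → ZMod q), HammingRevDesign q n ω D →
        ∀ x ∈ D, ∃ (i : Fin n) (a : ZMod q),
          x ∈ hammingSlab q n i a ∧ hammingSlab q n i a ⊆ D) := by
  have : NeZero n := ⟨by omega⟩
  refine ⟨hammingRevDesign_hammingSlab hω, fun i a D' hD'slab hD' ⟨x, hx⟩ => ?_,
    fun D hD x hx => ?_⟩
  · obtain ⟨j, hj⟩ := exists_hammingSlab_subset hω hD' hx
    rw [hammingSlab_eq_of_subset (hj.trans hD'slab)] at hj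
    exact hD'slab.antisymm hj
  · obtain ⟨j, hj⟩ := exists_hammingSlab_subset hω hD hx
    exact ⟨j, x j, mem_hammingSlab.2 rfl, hj⟩

/-- The sets `D_{i,a} = {x : x_i = a}` are reverse designs of `H(n,q)`; each is a
minimal reverse design; and every reverse design is a union of sets of this form. -/
theorem hammingSlab_minimal_reverse_designs
    (q n : ℕ) [NeZero q] (hq : 2 ≤ q) (hn : 1 ≤ n)
    (ω : ℂ) (hω : IsPrimitiveRoot ω q) :
    (∀ (i : Fin n) (a : ZMod q), HammingRevDesign q n ω (hammingSlab q n i a)) ∧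
    (∀ (i : Fin n) (a : ZMod q), ∀ D' ⊆ hammingSlab q n i a,
        HammingRevDesign q n ω D' → D'.Nonempty → D' = hammingSlab q n i a) ∧
    (∀ D : Finset (Fin n → ZMod q), HammingRevDesign q n ω D →
        ∀ x ∈ D, ∃ (i : Fin n) (a : ZMod q),
          x ∈ hammingSlab q n i a ∧ hammingSlab q n i a ⊆ D) :=
  hammingSlab_minimal_reverse_designs_general q n hn ω hω
end
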